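/- arXiv:2204.06693 — 4 statements merged into one kernel-verified Lean document; each statement's English description precedes it below -/
import Mathlib

section
/- Let V : ℝ² → ℝ be a nonzero polynomial that is radially unbounded (V(x) → ∞ as ‖x‖ → ∞). Suppose the leading homogeneous part of V has nonzero even degree 2k. Then for all sufficiently large r > 0, V(e^{0.01}·(−r, 0)) > V((r, 0)). -/
/-! On the horizontal axis, V restricts to a univariate polynomial P with P(t) → ∞ as t → ±∞.
Hence P has even degree d ≥ 1 and positive leading coefficient a, so t ↦ P(-ct) - P(t) has
leading coefficient a (c^d - 1) > 0 for c = e^0.01 > 1 and tends to ∞. -/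

open MvPolynomial

namespace MvPolynomial

open Polynomial

variable {σ R : Type*} [CommSemiring R]

noncomputable def restrictLine (V : MvPolynomial σ R) (v : σ → R) : R[X] :=
  aeval (fun i => Polynomial.C (v i) * Polynomial.X) V

theorem eval_restrictLine (V : MvPolynomial σ R) (v : σ → R) (t : R) :
    (V.restrictLine v).eval t = eval (t • v) V := by
  rw [restrictLine, aeval_def, polynomial_eval_eval₂]
  congr 1
  · ext; simp
  · ext i
    rw [Polynomial.eval_C_mul, Polynomial.eval_X, Pi.smul_apply, smul_eq_mul, mul_comm]

end MvPolynomial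

section Cobounded

open Filter Bornology

theorem tendsto_cobounded_atTop_iff {E : Type*} [SeminormedAddCommGroup E] {f : E → ℝ} :
    Tendsto f (cobounded E) atTop ↔ ∀ R : ℝ, ∃ r : ℝ, ∀ x : E, r ≤ ‖x‖ → R ≤ f x := by
  simp [hasBasis_cobounded_norm.tendsto_iff atTop_basis]

theorem tendsto_smul_const_cobounded {𝕜 E : Type*} [NormedField 𝕜] [NormedAddCommGroup E]
    [NormedSpace 𝕜 E] {v : E} (hv : v ≠ 0) :
    Tendsto (fun t : 𝕜 => t • v) (cobounded 𝕜) (cobounded E) := by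
  simpa only [← tendsto_norm_atTop_iff_cobounded, norm_smul] using
    tendsto_norm_cobounded_atTop.atTop_mul_const (norm_pos_iff.2 hv)

end Cobounded

namespace Polynomial

open Filter

variable {P : ℝ[X]}

theorem tendsto_atTop_iff_leadingCoeff_pos :
    Tendsto (fun x => eval x P) atTop atTop ↔ 0 < P.degree ∧ 0 < P.leadingCoeff := by
  rw [tendsto_atTop_iff_leadingCoeff_nonneg]
  refine and_congr_right fun hdeg => ⟨fun hlc => hlc.lt_of_ne' ?_, le_of_lt⟩
  exact leadingCoeff_ne_zero.2 (ne_zero_of_degree_gt hdeg)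

theorem even_natDegree_of_tendsto_atBot_atTop (hbot : Tendsto (fun x => eval x P) atBot atTop)
    (htop : Tendsto (fun x => eval x P) atTop atTop) : Even P.natDegree := by
  have hlc := (tendsto_atTop_iff_leadingCoeff_pos.1 htop).2
  have hneg : Tendsto (fun x => eval x (P.comp (-X))) atTop atTop := by
    simpa [Function.comp_def] using hbot.comp tendsto_neg_atTop_atBot
  have hlc_neg := (tendsto_atTop_iff_leadingCoeff_pos.1 hneg).2
  rw [leadingCoeff_comp (by simp), leadingCoeff_neg, leadingCoeff_X] at hlc_neg
  by_contra hodd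
  rw [(Nat.not_even_iff_odd.1 hodd).neg_pow, one_pow] at hlc_neg
  linarith

theorem tendsto_eval_mul_sub_eval_atTop (hdeg : 0 < P.degree) (hlc : 0 < P.leadingCoeff) {b : ℝ}
    (hb : 1 < b ^ P.natDegree) : Tendsto (fun x => eval (b * x) P - eval x P) atTop atTop := by
  set Q := P.comp (C b * X) - P
  have hcoeff : Q.coeff P.natDegree = P.leadingCoeff * (b ^ P.natDegree - 1) := by
    simp only [Q, coeff_sub, comp_C_mul_X_coeff, coeff_natDegree]; ring
  have hQ_lc_pos : 0 < P.leadingCoeff * (b ^ P.natDegree - 1) := mul_pos hlc (by linarith)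
  have hQ_natDegree : Q.natDegree = P.natDegree := by
    refine natDegree_eq_of_le_of_coeff_ne_zero ?_ (hcoeff ▸ hQ_lc_pos.ne')
    refine (natDegree_sub_le _ _).trans (max_le (natDegree_comp_le.trans ?_) le_rfl)
    exact mul_le_of_le_one_right' ((natDegree_C_mul_le _ _).trans natDegree_X_le)
  have hQ_deg : 0 < Q.degree :=
    natDegree_pos_iff_degree_pos.1 (hQ_natDegree ▸ natDegree_pos_iff_degree_pos.2 hdeg)
  have hQ_lc : 0 ≤ Q.leadingCoeff := by
    rw [leadingCoeff, hQ_natDegree, hcoeff]; exact hQ_lc_pos.le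
  simpa [Q, eval_comp] using Q.tendsto_atTop_of_leadingCoeff_nonneg hQ_deg hQ_lc

end Polynomial

theorem stmt10_general (V : MvPolynomial (Fin 2) ℝ)
    (hrad : ∀ R : ℝ, ∃ r : ℝ, ∀ x : Fin 2 → ℝ, r ≤ ‖x‖ → R ≤ eval x V) :
    ∃ r₀ : ℝ, 0 < r₀ ∧ ∀ r : ℝ, r₀ ≤ r →
      eval ![r, 0] V < eval (Real.exp 0.01 • ![-r, 0]) V := by
  set P := V.restrictLine ![1, 0]
  have hP : Filter.Tendsto P.eval (Bornology.cobounded ℝ) Filter.atTop := by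
    have hv : (![1, 0] : Fin 2 → ℝ) ≠ 0 := fun h => by simpa using congrFun h 0
    simpa [Function.comp_def, P, eval_restrictLine] using
      (tendsto_cobounded_atTop_iff.2 hrad).comp (tendsto_smul_const_cobounded (𝕜 := ℝ) hv)
  rw [IsOrderBornology.cobounded_eq, Filter.tendsto_sup] at hP
  obtain ⟨hdeg, hlc⟩ := Polynomial.tendsto_atTop_iff_leadingCoeff_pos.1 hP.2
  have hc : 1 < Real.exp 0.01 := Real.one_lt_exp_iff.2 (by norm_num)
  have hb : 1 < (-Real.exp 0.01) ^ P.natDegree := by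
    rw [(Polynomial.even_natDegree_of_tendsto_atBot_atTop hP.1 hP.2).neg_pow]
    exact one_lt_pow₀ hc (Polynomial.natDegree_pos_iff_degree_pos.2 hdeg).ne'
  obtain ⟨r₀, hr₀⟩ := Filter.eventually_atTop.1
    ((Polynomial.tendsto_eval_mul_sub_eval_atTop hdeg hlc hb).eventually_gt_atTop 0)
  refine ⟨max r₀ 1, by positivity, fun r hr => ?_⟩
  have hpt : ![r, 0] = r • ![(1 : ℝ), 0] := by simp
  have hpt' : Real.exp 0.01 • ![-r, 0] = (-Real.exp 0.01 * r) • ![(1 : ℝ), 0] := by simp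
  have hgap := hr₀ r (le_of_max_le_left hr)
  rw [hpt, hpt', ← eval_restrictLine, ← eval_restrictLine]
  linarith [hgap]

theorem stmt10 (V : MvPolynomial (Fin 2) ℝ) (hV : V ≠ 0)
    (hrad : ∀ R : ℝ, ∃ r : ℝ, ∀ x : Fin 2 → ℝ, r ≤ ‖x‖ → R ≤ eval x V)
    (k : ℕ) (hk : k ≠ 0) (hdeg : V.totalDegree = 2 * k) :
    ∃ r₀ : ℝ, 0 < r₀ ∧ ∀ r : ℝ, r₀ ≤ r →
      eval ![r, 0] V < eval (Real.exp 0.01 • ![-r, 0]) V :=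
  stmt10_general V hrad
end

section
/- The hybrid linear system of Example 1 admits no polynomial Lyapunov function: there is no polynomial V : ℝ² → ℝ with V(0) = 0, V(x) > 0 for x ≠ 0, and V strictly decreasing along all trajectories of the system. -/
open MvPolynomial MeasureTheory

/-- Flow matrices of the hybrid linear system of Example 1. -/
noncomputable def Amat : Fin 4 → Matrix (Fin 2) (Fin 2) ℝ :=
  ![!![1/2, 1; -1, -3/2], !![-1, 1; -1, 1], !![1.01, 1; -1, -0.99], !![-1, 1; -1, 1]]

/-- Domains (the four closed quadrants of ℝ²). -/
def Hdom : Fin 4 → Set (Fin 2 → ℝ) :=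
  ![{x | 0 ≤ x 0 ∧ 0 ≤ x 1}, {x | 0 ≤ x 0 ∧ x 1 ≤ 0},
    {x | x 0 ≤ 0 ∧ x 1 ≤ 0}, {x | x 0 ≤ 0 ∧ 0 ≤ x 1}]

/-- The set-valued map of the hybrid system. -/
def Fmap (x : Fin 2 → ℝ) : Set (Fin 2 → ℝ) :=
  {v | ∃ q : Fin 4, x ∈ Hdom q ∧ v = (Amat q).mulVec x}

/-- A trajectory: an absolutely continuous solution of the differential
inclusion `ξ' ∈ Fmap ξ` a.e. on `[0, ∞)`, encoded via an integrable derivative. -/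
def IsTrajectory (ξ : ℝ → Fin 2 → ℝ) : Prop :=
  ∃ v : ℝ → Fin 2 → ℝ,
    (∀ t : ℝ, 0 ≤ t → IntervalIntegrable v volume 0 t) ∧
    (∀ t : ℝ, 0 ≤ t → ξ t = ξ 0 + ∫ s in (0:ℝ)..t, v s) ∧
    (∀ᵐ s ∂volume, 0 ≤ s → v s ∈ Fmap (ξ s))

/-!
Let `q(s) = V(s, 0)`. The trajectory from `(r, 0)` turns clockwise through the quadrants and
reaches `(-e^{1/100} r, 0)` at time `2`, so a Lyapunov function would give
`0 < q(-e^{1/100} r) < q(r)` for all `r > 0`. No polynomial does this: a constant one cannot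
decrease, and otherwise `q(x) / q(a x) → a^{-deg q}` as `x → ∞`, of absolute value `< 1` for
`|a| > 1`, while the ratio stays above `1`.
-/

open Set Matrix Filter

theorem Polynomial.not_forall_pos_eval_mul_lt (q : Polynomial ℝ) {a : ℝ} (ha : 1 < |a|) :
    ¬ ∀ x > 0, 0 < q.eval (a * x) ∧ q.eval (a * x) < q.eval x := by
  intro h
  rcases Nat.eq_zero_or_pos q.natDegree with hn | hn
  · rw [eq_C_of_natDegree_eq_zero hn] at h
    simpa using (h 1 one_pos).2
  have ha0 : a ≠ 0 := by rintro rfl; norm_num at ha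
  set Q := q.comp (Polynomial.C a * Polynomial.X)
  have hQ : ∀ x, Q.eval x = q.eval (a * x) := by simp [Q]
  have hq0 : q ≠ 0 := ne_zero_of_natDegree_gt hn
  have hQdeg : Q.natDegree = q.natDegree := by
    rw [natDegree_comp, natDegree_C_mul_X _ ha0, mul_one]
  have hdeg : q.degree = Q.degree := by
    rw [degree_eq_natDegree hq0, degree_eq_natDegree (ne_zero_of_natDegree_gt (hQdeg ▸ hn)),
      hQdeg]
  have hlc : Q.leadingCoeff = q.leadingCoeff * a ^ q.natDegree := by
    rw [leadingCoeff_comp (by rw [natDegree_C_mul_X _ ha0]; exact one_ne_zero),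
      leadingCoeff_C_mul_X]
  have hlim := div_tendsto_atTop_leadingCoeff_div_of_degree_eq q Q hdeg
  rw [hlc, div_mul_cancel_left₀ (leadingCoeff_ne_zero.2 hq0)] at hlim
  have hge : 1 ≤ (a ^ q.natDegree)⁻¹ := by
    refine ge_of_tendsto hlim ((eventually_gt_atTop 0).mono fun x hx => ?_)
    rw [hQ, one_le_div (h x hx).1]
    exact (h x hx).2.le
  have hlt : |(a ^ q.natDegree)⁻¹| < 1 := by
    rw [abs_inv, abs_pow]
    exact inv_lt_one_of_one_lt₀ (one_lt_pow₀ ha hn.ne')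
  linarith [le_abs_self (a ^ q.natDegree)⁻¹]

theorem MvPolynomial.exists_polynomial_eval_eq_eval_smul {σ R : Type*} [CommRing R]
    (V : MvPolynomial σ R) (x : σ → R) :
    ∃ q : Polynomial R, ∀ s : R, q.eval s = eval (s • x) V := by
  refine ⟨aeval (fun i => Polynomial.C (x i) * Polynomial.X) V, fun s => ?_⟩
  have hcomp := congrArg (· V)
    (comp_aeval (R := R) (fun i => Polynomial.C (x i) * Polynomial.X) (Polynomial.aeval s))
  have hpt : (fun i => Polynomial.eval s (Polynomial.C (x i) * Polynomial.X)) = s • x := by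
    ext i
    rw [Polynomial.eval_mul, Polynomial.eval_C, Polynomial.eval_X, Pi.smul_apply, smul_eq_mul,
      mul_comm]
  simpa only [AlgHom.coe_comp, Function.comp_apply, Polynomial.coe_aeval_eq_eval, hpt,
    aeval_eq_eval] using hcomp

section LinFlow

variable {n : Type*} [Fintype n] (μ : ℝ) (N : Matrix n n ℝ) (x : n → ℝ)

-- Since `N * N = 0`, this is `exp (t • (μ • 1 + N)) *ᵥ x`.
noncomputable def linFlow (t : ℝ) : n → ℝ :=
  Real.exp (μ * t) • (x + t • N *ᵥ x)

@[simp]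
lemma linFlow_zero : linFlow μ N x 0 = x := by
  simp [linFlow]

lemma linFlow_smul (r t : ℝ) : linFlow μ N (r • x) t = r • linFlow μ N x t := by
  simp only [linFlow, Matrix.mulVec_smul]
  module

lemma hasDerivAt_linFlow [DecidableEq n] {N : Matrix n n ℝ} (hN : N * N = 0) (t : ℝ) :
    HasDerivAt (linFlow μ N x) ((μ • 1 + N) *ᵥ linFlow μ N x t) t := by
  have hexp : HasDerivAt (fun t => Real.exp (μ * t)) (Real.exp (μ * t) * μ) t := by
    simpa using ((hasDerivAt_id t).const_mul μ).exp
  have hline : HasDerivAt (fun t : ℝ => x + t • N *ᵥ x) (N *ᵥ x) t := by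
    simpa using ((hasDerivAt_id t).smul_const (N *ᵥ x)).const_add x
  refine (hexp.smul hline).congr_deriv ?_
  simp only [linFlow, Matrix.add_mulVec, Matrix.smul_mulVec, Matrix.one_mulVec,
    Matrix.mulVec_smul, Matrix.mulVec_add]
  rw [Matrix.mulVec_mulVec, hN, Matrix.zero_mulVec]
  module

-- `linFlow μ N x t` is a positive multiple of a point of the segment from `x` to `x + N *ᵥ x`.
lemma linFlow_mem {C : Set (n → ℝ)}
    (hC : ∀ a b : ℝ, 0 ≤ a → 0 ≤ b → ∀ y ∈ C, ∀ z ∈ C, a • y + b • z ∈ C)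
    (hx : x ∈ C) (hx₁ : linFlow μ N x 1 ∈ C) {t : ℝ} (ht : t ∈ Icc (0 : ℝ) 1) :
    linFlow μ N x t ∈ C := by
  have hsmul (r : ℝ) (hr : 0 ≤ r) (y : n → ℝ) (hy : y ∈ C) : r • y ∈ C := by
    simpa using hC r 0 hr le_rfl y hy y hy
  have hsegment : linFlow μ N x t =
      Real.exp (μ * t) • ((1 - t) • x + (t * Real.exp (-μ)) • linFlow μ N x 1) := by
    simp only [linFlow, smul_smul, mul_one, one_smul]
    rw [mul_assoc, ← Real.exp_add, neg_add_cancel, Real.exp_zero, mul_one]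
    module
  rw [hsegment]
  exact hsmul _ (Real.exp_pos _).le _
    (hC _ _ (sub_nonneg.2 ht.2) (mul_nonneg ht.1 (Real.exp_pos _).le) _ hx _ hx₁)

end LinFlow

section FloorGlue

noncomputable def floorGlue {α : Type*} (f : ℕ → ℝ → α) (t : ℝ) : α := f ⌊t⌋₊ t

lemma floorGlue_eq_of_mem_Icc {α : Type*} {f : ℕ → ℝ → α}
    (hf : ∀ m : ℕ, f m (m + 1) = f (m + 1) (m + 1)) {m : ℕ} {t : ℝ}
    (ht : t ∈ Icc (m : ℝ) (m + 1)) : floorGlue f t = f m t := by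
  rcases ht.2.lt_or_eq with hlt | rfl
  · rw [floorGlue, Nat.floor_eq_on_Ico m t ⟨ht.1, hlt⟩]
  · have hfloor : ⌊(m : ℝ) + 1⌋₊ = m + 1 := by exact_mod_cast Nat.floor_natCast (m + 1)
    rw [floorGlue, hfloor, hf]

variable {E : Type*} [NormedAddCommGroup E] [NormedSpace ℝ E] [CompleteSpace E]
  {f f' : ℕ → ℝ → E}

lemma integral_floorGlue_of_mem_Icc (hf : ∀ m : ℕ, f m (m + 1) = f (m + 1) (m + 1))
    (hderiv : ∀ m t, HasDerivAt (f m) (f' m t) t) (hcont : ∀ m, Continuous (f' m))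
    {m : ℕ} {t : ℝ} (ht : t ∈ Icc (m : ℝ) (m + 1)) :
    IntervalIntegrable (floorGlue f') volume m t ∧
      ∫ s in (m : ℝ)..t, floorGlue f' s = floorGlue f t - floorGlue f m := by
  have heq : EqOn (floorGlue f') (f' m) (Ioo m t) := fun s hs => by
    rw [floorGlue, Nat.floor_eq_on_Ico m s ⟨hs.1.le, hs.2.trans_le ht.2⟩]
  have hint : IntervalIntegrable (f' m) volume m t := (hcont m).intervalIntegrable _ _
  refine ⟨(intervalIntegrable_congr_uIoo (uIoo_of_le ht.1 ▸ heq)).2 hint, ?_⟩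
  rw [intervalIntegral.integral_congr_Ioo_of_le ht.1 heq,
    intervalIntegral.integral_eq_sub_of_hasDerivAt (fun s _ => hderiv m s) hint,
    floorGlue_eq_of_mem_Icc hf ht, floorGlue_eq_of_mem_Icc hf ⟨le_rfl, by linarith⟩]

lemma floorGlue_eq_add_integral (hf : ∀ m : ℕ, f m (m + 1) = f (m + 1) (m + 1))
    (hderiv : ∀ m t, HasDerivAt (f m) (f' m t) t) (hcont : ∀ m, Continuous (f' m))
    {t : ℝ} (ht : 0 ≤ t) :
    IntervalIntegrable (floorGlue f') volume 0 t ∧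
      floorGlue f t = floorGlue f 0 + ∫ s in (0 : ℝ)..t, floorGlue f' s := by
  suffices ∀ m : ℕ, ∀ t ∈ Icc (m : ℝ) (m + 1), IntervalIntegrable (floorGlue f') volume 0 t ∧
      ∫ s in (0 : ℝ)..t, floorGlue f' s = floorGlue f t - floorGlue f 0 by
    obtain ⟨hint, heq⟩ := this ⌊t⌋₊ t ⟨Nat.floor_le ht, (Nat.lt_floor_add_one t).le⟩
    exact ⟨hint, by rw [heq, add_sub_cancel]⟩
  intro m
  induction m with
  | zero => simpa using fun t ht => integral_floorGlue_of_mem_Icc hf hderiv hcont (m := 0) ht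
  | succ m ih =>
    intro t ht
    obtain ⟨hint₁, heq₁⟩ := ih (m + 1) ⟨by linarith, le_rfl⟩
    obtain ⟨hint₂, heq₂⟩ := integral_floorGlue_of_mem_Icc hf hderiv hcont ht
    rw [Nat.cast_succ] at hint₂ heq₂
    refine ⟨hint₁.trans hint₂, ?_⟩
    rw [← intervalIntegral.integral_add_adjacent_intervals hint₁ hint₂, heq₁, heq₂,
      sub_add_sub_cancel']

end FloorGlue

noncomputable def rate : Fin 4 → ℝ := ![-1/2, 0, 1/100, 0]

def nilpart : Fin 4 → Matrix (Fin 2) (Fin 2) ℝ :=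
  ![!![1, 1; -1, -1], !![-1, 1; -1, 1], !![1, 1; -1, -1], !![-1, 1; -1, 1]]

lemma Amat_eq_smul_one_add (q : Fin 4) : Amat q = rate q • 1 + nilpart q := by
  fin_cases q <;> ext i j <;> fin_cases i <;> fin_cases j <;> norm_num [Amat, rate, nilpart]

lemma nilpart_mul_self (q : Fin 4) : nilpart q * nilpart q = 0 := by
  fin_cases q <;> ext i j <;> fin_cases i <;> fin_cases j <;> simp [nilpart, Matrix.mul_apply]

lemma add_smul_mem_Hdom (q : Fin 4) {a b : ℝ} (ha : 0 ≤ a) (hb : 0 ≤ b) {y z : Fin 2 → ℝ}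
    (hy : y ∈ Hdom q) (hz : z ∈ Hdom q) : a • y + b • z ∈ Hdom q := by
  fin_cases q <;> simp [Hdom] at hy hz ⊢ <;> constructor <;> nlinarith

lemma smul_mem_Hdom (q : Fin 4) {r : ℝ} (hr : 0 ≤ r) {y : Fin 2 → ℝ} (hy : y ∈ Hdom q) :
    r • y ∈ Hdom q := by
  simpa using add_smul_mem_Hdom q hr le_rfl hy hy

lemma IsTrajectory.smul {ξ : ℝ → Fin 2 → ℝ} (h : IsTrajectory ξ) {r : ℝ} (hr : 0 ≤ r) :
    IsTrajectory (fun t => r • ξ t) := by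
  obtain ⟨v, hint, heq, hmem⟩ := h
  refine ⟨fun t => r • v t, fun t ht => (hint t ht).smul r, fun t ht => ?_, ?_⟩
  · rw [intervalIntegral.integral_smul, ← smul_add, ← heq t ht]
  · filter_upwards [hmem] with s hs hs0
    obtain ⟨q, hq, hv⟩ := hs hs0
    exact ⟨q, smul_mem_Hdom q hr hq, by rw [hv, Matrix.mulVec_smul]⟩

/- The witness trajectory starts at `(1, 0)` and spends the time interval `[m, m + 1]` in the
quadrant `Hdom (mode m)`: IV, III, II, I, IV, ...; one turn brings it back to
`e^{-49/100} • (1, 0)`. -/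
def mode : ℕ → Fin 4
  | 0 => 1
  | 1 => 2
  | 2 => 3
  | 3 => 0
  | m + 4 => mode m

noncomputable def switchPt : ℕ → Fin 2 → ℝ
  | 0 => ![1, 0]
  | m + 1 => linFlow (rate (mode m)) (nilpart (mode m)) (switchPt m) 1

lemma switchPt_zero : switchPt 0 = ![1, 0] := rfl

lemma switchPt_one : switchPt 1 = ![0, -1] := by
  ext i; fin_cases i <;>
    simp [switchPt, linFlow, mode, rate, nilpart, Matrix.vecHead, Matrix.vecTail]

lemma switchPt_two : switchPt 2 = ![-Real.exp (1/100), 0] := by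
  ext i; fin_cases i <;>
    simp [switchPt, linFlow, mode, rate, nilpart, Matrix.vecHead, Matrix.vecTail]

lemma switchPt_three : switchPt 3 = ![0, Real.exp (1/100)] := by
  ext i; fin_cases i <;>
    simp [switchPt, linFlow, mode, rate, nilpart, Matrix.vecHead, Matrix.vecTail]

lemma switchPt_four : switchPt 4 = Real.exp (-49/100) • switchPt 0 := by
  ext i; fin_cases i <;>
    simp [switchPt, linFlow, mode, rate, nilpart, Matrix.vecHead, Matrix.vecTail]
  rw [← Real.exp_add]; norm_num

lemma switchPt_add_four (m : ℕ) : switchPt (m + 4) = Real.exp (-49/100) • switchPt m := by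
  induction m with
  | zero => exact switchPt_four
  | succ m ih =>
    show linFlow (rate (mode m)) (nilpart (mode m)) (switchPt (m + 4)) 1 = _
    rw [ih, linFlow_smul]
    rfl

lemma switchPt_mem_Hdom :
    ∀ m : ℕ, switchPt m ∈ Hdom (mode m) ∧ switchPt (m + 1) ∈ Hdom (mode m)
  | 0 => by simp [switchPt_zero, switchPt_one, mode, Hdom]
  | 1 => by simp [switchPt_one, switchPt_two, mode, Hdom, Real.exp_nonneg]
  | 2 => by simp [switchPt_two, switchPt_three, mode, Hdom, Real.exp_nonneg]
  | 3 => by simp [switchPt_three, switchPt_four, switchPt_zero, mode, Hdom, Real.exp_nonneg]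
  | m + 4 => by
    rw [switchPt_add_four, show m + 4 + 1 = m + 1 + 4 from rfl, switchPt_add_four]
    exact ⟨smul_mem_Hdom _ (Real.exp_pos _).le (switchPt_mem_Hdom m).1,
      smul_mem_Hdom _ (Real.exp_pos _).le (switchPt_mem_Hdom m).2⟩

noncomputable def switchPiece (m : ℕ) (t : ℝ) : Fin 2 → ℝ :=
  linFlow (rate (mode m)) (nilpart (mode m)) (switchPt m) (t - m)

lemma switchPiece_succ (m : ℕ) : switchPiece m (m + 1) = switchPiece (m + 1) (m + 1) := by
  simp [switchPiece, switchPt]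

lemma hasDerivAt_switchPiece (m : ℕ) (t : ℝ) :
    HasDerivAt (switchPiece m) (Amat (mode m) *ᵥ switchPiece m t) t := by
  rw [Amat_eq_smul_one_add]
  exact HasDerivAt.comp_sub_const t m (hasDerivAt_linFlow _ _ (nilpart_mul_self _) (t - m))

lemma switchPiece_mem_Hdom {m : ℕ} {t : ℝ} (ht : t ∈ Icc (m : ℝ) (m + 1)) :
    switchPiece m t ∈ Hdom (mode m) :=
  linFlow_mem _ _ _ (fun _ _ ha hb _ hy _ hz => add_smul_mem_Hdom _ ha hb hy hz)
    (switchPt_mem_Hdom m).1 (switchPt_mem_Hdom m).2 ⟨sub_nonneg.2 ht.1, by linarith [ht.2]⟩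

noncomputable def spiral : ℝ → Fin 2 → ℝ := floorGlue switchPiece

lemma isTrajectory_spiral : IsTrajectory spiral := by
  have hcont (m : ℕ) : Continuous fun t => Amat (mode m) *ᵥ switchPiece m t :=
    continuous_const.matrix_mulVec
      (continuous_iff_continuousAt.2 fun t => (hasDerivAt_switchPiece m t).continuousAt)
  have hFTC {t : ℝ} (ht : 0 ≤ t) :=
    floorGlue_eq_add_integral switchPiece_succ hasDerivAt_switchPiece hcont ht
  refine ⟨_, fun t ht => (hFTC ht).1, fun t ht => (hFTC ht).2, ae_of_all _ fun s hs => ?_⟩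
  exact ⟨mode ⌊s⌋₊, switchPiece_mem_Hdom ⟨Nat.floor_le hs, (Nat.lt_floor_add_one s).le⟩, rfl⟩

lemma spiral_zero : spiral 0 = ![1, 0] := by
  simp [spiral, floorGlue, switchPiece, switchPt]

lemma spiral_two : spiral 2 = ![-Real.exp (1/100), 0] := by
  simp [spiral, floorGlue, switchPiece, switchPt_two]

theorem stmt11 :
    ¬ ∃ V : MvPolynomial (Fin 2) ℝ,
        eval (0 : Fin 2 → ℝ) V = 0 ∧
        (∀ x : Fin 2 → ℝ, x ≠ 0 → 0 < eval x V) ∧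
        ∀ ξ : ℝ → Fin 2 → ℝ, IsTrajectory ξ → ξ 0 ≠ 0 →
          StrictAntiOn (fun t => eval (ξ t) V) (Set.Ici 0) := by
  rintro ⟨V, -, hVpos, hVdec⟩
  obtain ⟨q, hq⟩ := MvPolynomial.exists_polynomial_eval_eq_eval_smul V ![1, 0]
  have he₀ : (![1, 0] : Fin 2 → ℝ) ≠ 0 := fun h => one_ne_zero (congrFun h 0)
  refine q.not_forall_pos_eval_mul_lt (a := -Real.exp (1/100)) ?_ fun r hr => ?_
  · rw [abs_neg, abs_of_pos (Real.exp_pos _)]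
    exact Real.one_lt_exp_iff.2 (by norm_num)
  have hstart : r • spiral 0 = r • ![1, 0] := by rw [spiral_zero]
  have hend : r • spiral 2 = (-Real.exp (1/100) * r) • ![1, 0] := by
    rw [spiral_two]; ext i; fin_cases i <;> simp [mul_comm]
  have hdec := hVdec (fun t => r • spiral t) (isTrajectory_spiral.smul hr.le)
    (by simpa only [hstart] using smul_ne_zero hr.ne' he₀) self_mem_Ici
    (by norm_num : (2 : ℝ) ∈ Ici 0) two_pos
  rw [hq, hq, ← hend, ← hstart]
  refine ⟨hVpos _ ?_, hdec⟩
  rw [hend]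
  exact smul_ne_zero (mul_ne_zero (neg_ne_zero.2 (Real.exp_pos _).ne') hr.ne') he₀
end

section
/- Fix λ ∈ ℝ, λ ≠ 0, and real numbers f̄, ḡ, f̃, g̃. The following two statements are equivalent: (i) for all nonzero λ, [f̄λ ≥ ḡλ ⇒ (f̄λ > 0 ∧ −f̄λ + f̃|λ| < 0)] and [ḡλ ≥ f̄λ ⇒ (ḡλ > 0 ∧ −ḡλ + g̃|λ| < 0)]; (ii) f̄·ḡ < 0, |f̄| > f̃, and |ḡ| > g̃. -/
/-!
The condition is invariant under rescaling `λ` by a positive factor, so it only has to be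
checked at `λ = 1` and `λ = -1`. There it says that whichever of `f̄, ḡ` is larger is positive
and exceeds its tilde value, and whichever is smaller is negative and its negation exceeds its
tilde value; this forces opposite signs and is exactly the condition `f̄ ḡ < 0, |f̄| > f̃, |ḡ| > g̃`.
-/

def DominatesAt (a b t l : ℝ) : Prop :=
  b * l ≤ a * l → 0 < a * l ∧ -(a * l) + t * |l| < 0

lemma dominatesAt_mul_left_iff {a b t c : ℝ} (hc : 0 < c) (l : ℝ) :
    DominatesAt a b t (c * l) ↔ DominatesAt a b t l := by
  have hscale : -(a * (c * l)) + t * |c * l| = c * (-(a * l) + t * |l|) := by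
    rw [abs_mul, abs_of_pos hc]; ring
  have hmargin : c * (-(a * l) + t * |l|) < 0 ↔ -(a * l) + t * |l| < 0 :=
    ⟨fun h => neg_of_mul_neg_right h hc.le, mul_neg_of_pos_of_neg hc⟩
  rw [DominatesAt, DominatesAt, hscale, hmargin, mul_left_comm a, mul_left_comm b,
    mul_le_mul_iff_right₀ hc, mul_pos_iff_of_pos_left hc]

lemma dominatesAt_one_iff {a b t : ℝ} : DominatesAt a b t 1 ↔ (b ≤ a → 0 < a ∧ t < a) := by
  simp only [DominatesAt, mul_one, abs_one, neg_add_lt_iff_lt_add, add_zero]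

lemma dominatesAt_neg_one_iff {a b t : ℝ} :
    DominatesAt a b t (-1) ↔ (a ≤ b → a < 0 ∧ t < -a) := by
  simp only [DominatesAt, mul_neg_one, abs_neg, abs_one, mul_one, neg_le_neg_iff, neg_neg,
    lt_neg_iff_add_neg', add_zero]

lemma forall_ne_zero_iff_of_mul_left_iff {P : ℝ → Prop} (hP : ∀ c, 0 < c → ∀ l, P (c * l) ↔ P l) :
    (∀ l, l ≠ 0 → P l) ↔ P 1 ∧ P (-1) := by
  refine ⟨fun h => ⟨h 1 one_ne_zero, h (-1) (neg_ne_zero.2 one_ne_zero)⟩, ?_⟩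
  rintro ⟨h1, hneg1⟩ l hl
  rcases hl.lt_or_gt with hneg | hpos
  · simpa using (hP (-l) (neg_pos.2 hneg) (-1)).2 hneg1
  · simpa using (hP l hpos 1).2 h1

lemma sign_conditions_iff {a b s t : ℝ} :
    ((b ≤ a → 0 < a ∧ s < a) ∧ (a ≤ b → 0 < b ∧ t < b)) ∧
        ((a ≤ b → a < 0 ∧ s < -a) ∧ (b ≤ a → b < 0 ∧ t < -b)) ↔
      a * b < 0 ∧ s < |a| ∧ t < |b| := by
  constructor
  · rintro ⟨⟨hpos_a, hpos_b⟩, hneg_a, hneg_b⟩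
    rcases le_total b a with hba | hab
    · obtain ⟨ha, hsa⟩ := hpos_a hba
      obtain ⟨hb, htb⟩ := hneg_b hba
      exact ⟨mul_neg_of_pos_of_neg ha hb, lt_abs.2 (Or.inl hsa), lt_abs.2 (Or.inr htb)⟩
    · obtain ⟨hb, htb⟩ := hpos_b hab
      obtain ⟨ha, hsa⟩ := hneg_a hab
      exact ⟨mul_neg_of_neg_of_pos ha hb, lt_abs.2 (Or.inr hsa), lt_abs.2 (Or.inl htb)⟩
  · rintro ⟨hab, hs, ht⟩
    rcases mul_neg_iff.1 hab with ⟨ha, hb⟩ | ⟨ha, hb⟩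
    · rw [abs_of_pos ha] at hs
      rw [abs_of_neg hb] at ht
      exact ⟨⟨fun _ => ⟨ha, hs⟩, fun _ => by linarith⟩, fun _ => by linarith, fun _ => ⟨hb, ht⟩⟩
    · rw [abs_of_neg ha] at hs
      rw [abs_of_pos hb] at ht
      exact ⟨⟨fun _ => by linarith, fun _ => ⟨hb, ht⟩⟩, fun _ => ⟨ha, hs⟩, fun _ => by linarith⟩

theorem stmt12 (f g ft gt : ℝ) :
    (∀ l : ℝ, l ≠ 0 →
        ((g * l ≤ f * l → (0 < f * l ∧ -(f * l) + ft * |l| < 0)) ∧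
         (f * l ≤ g * l → (0 < g * l ∧ -(g * l) + gt * |l| < 0)))) ↔
      (f * g < 0 ∧ ft < |f| ∧ gt < |g|) := by
  change (∀ l : ℝ, l ≠ 0 → DominatesAt f g ft l ∧ DominatesAt g f gt l) ↔ _
  rw [forall_ne_zero_iff_of_mul_left_iff fun c hc l => and_congr
      (dominatesAt_mul_left_iff hc l) (dominatesAt_mul_left_iff hc l)]
  simp only [dominatesAt_one_iff, dominatesAt_neg_one_iff]
  exact sign_conditions_iff
end

section
/- Let V(x) = max_{i∈[m]} c_i^⊤ x and suppose conditions (C1) and (C2) hold: (C1) for all nonzero x there is i with c_i^⊤ x > 0; (C2) for all nonzero x, all v ∈ F(x), and all i with c_i^⊤ x = V(x), one has c_i^⊤ v < 0. Then for every absolutely continuous trajectory ξ with ξ'(t) ∈ F(ξ(t)) a.e. and ξ(t) ≠ 0 on an interval [a,b] with a < b, the function t ↦ V(ξ(t)) is strictly decreasing on [a,b]. -/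
/-!
Along an absolutely continuous trajectory each linear form `t ↦ c_i ⬝ ξ t` is absolutely
continuous with a.e. derivative `c_i ⬝ ξ' t`, so their maximum `V ∘ ξ` is absolutely continuous
too. At a point where all of them are differentiable, an index active there touches `V ∘ ξ` from
below, so the two derivatives agree (Danskin); by (C2) the derivative of `V ∘ ξ` is therefore
negative almost everywhere, and the fundamental theorem of calculus for absolutely continuous
functions turns this into strict decrease.
-/

open MeasureTheory

noncomputable def polyV {m d : ℕ} (hm : 0 < m) (c : Fin m → Fin d → ℝ)
    (x : Fin d → ℝ) : ℝ :=
  Finset.univ.sup' ⟨⟨0, hm⟩, Finset.mem_univ _⟩ (fun i => ∑ k, c i k * x k)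

open Set Filter Topology

namespace AbsolutelyContinuousOnInterval

variable {f g : ℝ → ℝ} {a b : ℝ}

theorem congr (hf : AbsolutelyContinuousOnInterval f a b) (h : EqOn g f (uIcc a b)) :
    AbsolutelyContinuousOnInterval g a b := by
  refine Tendsto.congr' (eventually_inf_principal.2 (Eventually.of_forall fun E hE => ?_)) hf
  exact Finset.sum_congr rfl fun i hi => by rw [h (hE.1 i hi).1, h (hE.1 i hi).2]

theorem sup (hf : AbsolutelyContinuousOnInterval f a b)
    (hg : AbsolutelyContinuousOnInterval g a b) : AbsolutelyContinuousOnInterval (f ⊔ g) a b := by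
  have hsum := Tendsto.add hf hg
  rw [add_zero] at hsum
  refine squeeze_zero (fun _ => Finset.sum_nonneg fun _ _ => dist_nonneg) (fun E => ?_) hsum
  rw [← Finset.sum_add_distrib]
  gcongr with i
  simp only [Pi.sup_apply, Real.dist_eq]
  exact (abs_max_sub_max_le_max _ _ _ _).trans (max_le_add_of_nonneg (abs_nonneg _) (abs_nonneg _))

theorem finset_sup'_apply {ι : Type*} {s : Finset ι} (hs : s.Nonempty) {G : ι → ℝ → ℝ}
    (hG : ∀ i ∈ s, AbsolutelyContinuousOnInterval (G i) a b) :
    AbsolutelyContinuousOnInterval (fun t => s.sup' hs (G · t)) a b := by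
  induction hs using Finset.Nonempty.cons_induction with
  | singleton i => simpa using hG i (Finset.mem_singleton_self i)
  | cons i s hi hs ih =>
    simp only [Finset.sup'_cons hs]
    exact (hG i (Finset.mem_cons_self i s)).sup (ih fun j hj => hG j (Finset.mem_cons_of_mem hj))

theorem strictAntiOn_of_ae_deriv_neg (hf : AbsolutelyContinuousOnInterval f a b)
    (hf' : ∀ᵐ t, t ∈ Ioo a b → deriv f t < 0) : StrictAntiOn f (Icc a b) := by
  intro p hp q hq hpq
  have hfpq := hf.mono (uIcc_subset_uIcc (Icc_subset_uIcc hp) (Icc_subset_uIcc hq))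
  have hneg : ∀ᵐ t ∂volume.restrict (Ioc p q), deriv f t < 0 :=
    ae_restrict_of_ae_eq_of_ae_restrict Ioo_ae_eq_Ioc <| (ae_restrict_iff' measurableSet_Ioo).2 <|
      hf'.mono fun t h ht => h ⟨hp.1.trans_lt ht.1, ht.2.trans_le hq.2⟩
  have hpos : volume.restrict (Ioc p q) {t | deriv f t < 0} ≠ 0 := by
    rw [measure_congr (ae_eq_univ.2 hneg), Measure.restrict_apply_univ, Real.volume_Ioc]
    exact ENNReal.ofReal_pos.2 (sub_pos.2 hpq) |>.ne'
  rw [← sub_neg, ← hfpq.integral_deriv_eq_sub]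
  calc ∫ t in p..q, deriv f t
      < ∫ _ in p..q, (0 : ℝ) :=
        intervalIntegral.integral_lt_integral_of_ae_le_of_measure_setOfPred_lt_ne_zero hpq.le
          hfpq.intervalIntegrable_deriv intervalIntegrable_const (hneg.mono fun _ h => h.le) hpos
    _ = 0 := intervalIntegral.integral_zero

end AbsolutelyContinuousOnInterval

section Primitive

variable {g w : ℝ → ℝ} {a b : ℝ}

theorem AbsolutelyContinuousOnInterval.of_eq_add_integral (hw : IntervalIntegrable w volume a b)
    (hab : a ≤ b) (hg : ∀ t ∈ Icc a b, g t = g a + ∫ s in a..t, w s) :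
    AbsolutelyContinuousOnInterval g a b := by
  have hconst : AbsolutelyContinuousOnInterval (fun _ => g a) a b :=
    (LipschitzWith.const (g a)).lipschitzOnWith.absolutelyContinuousOnInterval
  refine (hconst.add (hw.absolutelyContinuousOnInterval_intervalIntegral left_mem_uIcc)).congr ?_
  rw [uIcc_of_le hab]
  exact hg

theorem ae_hasDerivAt_of_eq_add_integral (hw : IntervalIntegrable w volume a b)
    (hg : ∀ t ∈ Icc a b, g t = g a + ∫ s in a..t, w s) :
    ∀ᵐ t, t ∈ Ioo a b → HasDerivAt g (w t) t := by
  filter_upwards [hw.ae_hasDerivAt_integral] with t ht htab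
  have hprim := ht (Ioo_subset_Icc_self.trans Icc_subset_uIcc htab) a left_mem_uIcc
  refine (hprim.const_add (g a)).congr_of_eventuallyEq ?_
  filter_upwards [Ioo_mem_nhds htab.1 htab.2] with s hs using hg s (Ioo_subset_Icc_self hs)

end Primitive

theorem HasDerivAt.eq_of_eventuallyLE_of_eq {f g : ℝ → ℝ} {f' g' x : ℝ} (hf : HasDerivAt f f' x)
    (hg : HasDerivAt g g' x) (hle : g ≤ᶠ[𝓝 x] f) (heq : g x = f x) : f' = g' := by
  have hmin : IsLocalMin (f - g) x :=
    hle.mono fun y hy => by simpa [heq] using hy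
  exact sub_eq_zero.1 (hmin.hasDerivAt_eq_zero (hf.sub hg))

theorem exists_deriv_finset_sup'_eq {ι : Type*} {s : Finset ι} (hs : s.Nonempty) {G : ι → ℝ → ℝ}
    {G' : ι → ℝ} {x : ℝ} (hG : ∀ i ∈ s, HasDerivAt (G i) (G' i) x)
    (hf : DifferentiableAt ℝ (fun t => s.sup' hs (G · t)) x) :
    ∃ i ∈ s, G i x = s.sup' hs (G · x) ∧ deriv (fun t => s.sup' hs (G · t)) x = G' i := by
  obtain ⟨i, hi, hmax⟩ := Finset.exists_mem_eq_sup' hs (G · x)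
  exact ⟨i, hi, hmax.symm, hf.hasDerivAt.eq_of_eventuallyLE_of_eq (hG i hi)
    (Eventually.of_forall fun t => Finset.le_sup' (G · t) hi) hmax.symm⟩

theorem sum_mul_eq_add_intervalIntegral {d : ℕ} (c : Fin d → ℝ) {ξ v : ℝ → Fin d → ℝ} {a b : ℝ}
    (hv : IntervalIntegrable v volume a b) (hξ : ∀ t ∈ Icc a b, ξ t = ξ a + ∫ s in a..t, v s) :
    ∀ t ∈ Icc a b, ∑ k, c k * ξ t k = ∑ k, c k * ξ a k + ∫ s in a..t, ∑ k, c k * v s k := by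
  intro t ht
  let L : (Fin d → ℝ) →L[ℝ] ℝ := ∑ k, c k • ContinuousLinearMap.proj k
  have hL : ∀ x, L x = ∑ k, c k * x k := fun x => by simp [L]
  simp only [← hL]
  rw [hξ t ht, map_add, L.intervalIntegral_comp_comm (hv.mono_set (uIcc_subset_uIcc_left ?_))]
  exact Icc_subset_uIcc ht

theorem stmt16_general (d m : ℕ) (hm : 0 < m) (c : Fin m → Fin d → ℝ)
    (F : (Fin d → ℝ) → Set (Fin d → ℝ))
    (hC2 : ∀ x : Fin d → ℝ, x ≠ 0 → ∀ v ∈ F x, ∀ i : Fin m,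
      (∑ k, c i k * x k) = polyV hm c x → ∑ k, c i k * v k < 0)
    (ξ : ℝ → Fin d → ℝ) (a b : ℝ) (hab : a < b)
    -- absolute continuity of `ξ` on `[a, b]`, with a.e. derivative in `F (ξ t)`:
    (hξ : ∃ v : ℝ → Fin d → ℝ,
      IntervalIntegrable v volume a b ∧
      (∀ t ∈ Set.Icc a b, ξ t = ξ a + ∫ s in a..t, v s) ∧
      (∀ᵐ s ∂volume, s ∈ Set.Icc a b → v s ∈ F (ξ s)))
    (hne : ∀ t ∈ Set.Icc a b, ξ t ≠ 0) :
    StrictAntiOn (fun t => polyV hm c (ξ t)) (Set.Icc a b) := by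
  obtain ⟨v, hv, hξv, hvF⟩ := hξ
  have hw (i : Fin m) : IntervalIntegrable (fun s => ∑ k, c i k * v s k) volume a b := by
    have hvk (k : Fin d) : IntervalIntegrable (v · k) volume a b := ⟨hv.1.eval k, hv.2.eval k⟩
    simpa only [Finset.sum_fn] using IntervalIntegrable.sum _ fun k _ => (hvk k).const_mul (c i k)
  have hG (i : Fin m) := sum_mul_eq_add_intervalIntegral (c i) hv hξv
  have hAC : AbsolutelyContinuousOnInterval (fun t => polyV hm c (ξ t)) a b :=
    AbsolutelyContinuousOnInterval.finset_sup'_apply _ fun i _ =>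
      .of_eq_add_integral (hw i) hab.le (hG i)
  refine hAC.strictAntiOn_of_ae_deriv_neg ?_
  have hder (i : Fin m) := ae_hasDerivAt_of_eq_add_integral (hw i) (hG i)
  filter_upwards [ae_all_iff.2 hder, hAC.ae_differentiableAt, hvF] with t hderi hdiff hvt ht
  have htab : t ∈ Icc a b := Ioo_subset_Icc_self ht
  obtain ⟨i, -, hact, hderiv⟩ := exists_deriv_finset_sup'_eq _ (fun i _ => hderi i ht)
    (hdiff (Icc_subset_uIcc htab))
  exact hderiv.trans_lt (hC2 _ (hne t htab) _ (hvt htab) i hact)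

theorem stmt16 (d m : ℕ) (hd : 0 < d) (hm : 0 < m) (c : Fin m → Fin d → ℝ)
    (F : (Fin d → ℝ) → Set (Fin d → ℝ))
    (hFne : ∀ x, (F x).Nonempty) (hFcpt : ∀ x, IsCompact (F x))
    (hC1 : ∀ x : Fin d → ℝ, x ≠ 0 → ∃ i : Fin m, 0 < ∑ k, c i k * x k)
    (hC2 : ∀ x : Fin d → ℝ, x ≠ 0 → ∀ v ∈ F x, ∀ i : Fin m,
      (∑ k, c i k * x k) = polyV hm c x → ∑ k, c i k * v k < 0)
    (ξ : ℝ → Fin d → ℝ) (a b : ℝ) (hab : a < b)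
    -- absolute continuity of `ξ` on `[a, b]`, with a.e. derivative in `F (ξ t)`:
    (hξ : ∃ v : ℝ → Fin d → ℝ,
      IntervalIntegrable v volume a b ∧
      (∀ t ∈ Set.Icc a b, ξ t = ξ a + ∫ s in a..t, v s) ∧
      (∀ᵐ s ∂volume, s ∈ Set.Icc a b → v s ∈ F (ξ s)))
    (hne : ∀ t ∈ Set.Icc a b, ξ t ≠ 0) :
    StrictAntiOn (fun t => polyV hm c (ξ t)) (Set.Icc a b) :=
  stmt16_general d m hm c F hC2 ξ a b hab hξ hne
end
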